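/- arXiv:1502.01153 — 2 statements merged into one kernel-verified Lean document; each statement's English description precedes it below -/
import Mathlib

section
/- Let ζ₀ : Ω̄ → ℝ be continuous on a compact set Ω̄ ⊂ ℝⁿ with finite pointwise Dini seminorm ⟨ζ₀⟩_* = sup_x ∫₀^ρ ω_{ζ₀}(x;r)/r dr, and let U : Ω̄ → Ω̄ be a surjective map satisfying |U(x) − U(y)| ≤ K|x−y|^δ for some K ≥ 1, δ ∈ (0,1]. Then ζ = ζ₀ ∘ U satisfies ⟨ζ⟩_{*,ρ} ≤ (1/δ)·⟨ζ₀⟩_{*,Kρ^δ}, where ⟨g⟩_{*,σ} = sup_x ∫₀^σ ω_g(x;r)/r dr. -/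
open MeasureTheory Set
open scoped ENNReal

/-- Pointwise modulus of continuity `ω_g(x; r)` of `g` at `x`, relative to a set `s`. -/
noncomputable def modulusPtOn {n : ℕ} (s : Set (EuclideanSpace ℝ (Fin n)))
    (g : EuclideanSpace ℝ (Fin n) → ℝ) (x : EuclideanSpace ℝ (Fin n)) (r : ℝ) : ℝ :=
  sSup {d | ∃ y ∈ s, dist x y ≤ r ∧ d = |g x - g y|}

/-- Pointwise Dini seminorm `⟨g⟩_{*,σ} = sup_x ∫₀^σ ω_g(x;r)/r dr`. -/
noncomputable def diniSeminormPt {n : ℕ} (s : Set (EuclideanSpace ℝ (Fin n)))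
    (g : EuclideanSpace ℝ (Fin n) → ℝ) (σ : ℝ) : ℝ≥0∞ :=
  ⨆ x : s, ∫⁻ r in Ioc (0 : ℝ) σ, ENNReal.ofReal (modulusPtOn s g x r / r)

/-!
The Hölder bound `|U x - U y| ≤ K |x - y|^δ` sends the ball of radius `r` about `x` into the ball of
radius `K r^δ` about `U x`, so `ω_{ζ₀ ∘ U}(x; r) ≤ ω_{ζ₀}(U x; K r^δ)`. Substituting `τ = K r^δ`,
for which `dτ / τ = δ dr / r`, turns `∫₀^ρ ω_{ζ₀}(U x; K r^δ) dr / r` into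
`(1/δ) ∫₀^{K ρ^δ} ω_{ζ₀}(U x; τ) dτ / τ`, which is bounded by `(1/δ) ⟨ζ₀⟩_{*, K ρ^δ}` since `U x ∈ Ω̄`.
-/

section Modulus

variable {n : ℕ} {s : Set (EuclideanSpace ℝ (Fin n))} {g : EuclideanSpace ℝ (Fin n) → ℝ}

lemma modulusPtOn_nonneg (x : EuclideanSpace ℝ (Fin n)) (r : ℝ) : 0 ≤ modulusPtOn s g x r :=
  Real.sSup_nonneg <| by
    rintro d ⟨y, -, -, rfl⟩
    exact abs_nonneg _

lemma bddAbove_modulusPtOn_set {M : ℝ} (hg : ∀ y ∈ s, ‖g y‖ ≤ M)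
    (x : EuclideanSpace ℝ (Fin n)) (r : ℝ) :
    BddAbove {d | ∃ y ∈ s, dist x y ≤ r ∧ d = |g x - g y|} := by
  refine ⟨|g x| + M, ?_⟩
  rintro d ⟨y, hy, -, rfl⟩
  calc |g x - g y| ≤ |g x| + |g y| := abs_sub _ _
    _ ≤ |g x| + M := by simpa only [add_le_add_iff_left, Real.norm_eq_abs] using hg y hy

lemma modulusPtOn_comp_le {M : ℝ} (hg : ∀ y ∈ s, ‖g y‖ ≤ M)
    {U : EuclideanSpace ℝ (Fin n) → EuclideanSpace ℝ (Fin n)} (hUs : MapsTo U s s)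
    {x : EuclideanSpace ℝ (Fin n)} {r R : ℝ}
    (hUR : ∀ y ∈ s, dist x y ≤ r → dist (U x) (U y) ≤ R) :
    modulusPtOn s (g ∘ U) x r ≤ modulusPtOn s g (U x) R := by
  refine Real.sSup_le ?_ (modulusPtOn_nonneg _ _)
  rintro d ⟨y, hy, hxy, rfl⟩
  exact le_csSup (bddAbove_modulusPtOn_set hg _ _) ⟨U y, hUs hy, hUR y hy hxy, rfl⟩

end Modulus

section ChangeOfVariables

variable {K δ : ℝ}

lemma lintegral_image_mul_rpow_div_self {s : Set ℝ} (hs : MeasurableSet s) (hs0 : s ⊆ Ioi 0)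
    (hK : 0 < K) (hδ : 0 < δ) (φ : ℝ → ℝ) :
    ∫⁻ τ in (fun r => K * r ^ δ) '' s, ENNReal.ofReal (φ τ / τ) =
      ENNReal.ofReal δ * ∫⁻ r in s, ENNReal.ofReal (φ (K * r ^ δ) / r) := by
  have hderiv : ∀ r ∈ s, HasDerivWithinAt (fun r => K * r ^ δ) (K * (δ * r ^ (δ - 1))) s r :=
    fun r hr => ((Real.hasDerivAt_rpow_const (Or.inl (hs0 hr).ne')).const_mul K).hasDerivWithinAt
  have hinj : InjOn (fun r : ℝ => K * r ^ δ) s :=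
    StrictMonoOn.injOn fun a ha b _ hab =>
      mul_lt_mul_of_pos_left (Real.rpow_lt_rpow (le_of_lt (hs0 ha)) hab hδ) hK
  rw [lintegral_image_eq_lintegral_abs_deriv_mul hs hderiv hinj,
    ← lintegral_const_mul' _ _ ENNReal.ofReal_ne_top]
  refine setLIntegral_congr_fun hs fun r hr => ?_
  have hr0 : 0 < r := hs0 hr
  have hrδ : r ^ (δ - 1) = r ^ δ / r := by rw [Real.rpow_sub hr0, Real.rpow_one]
  rw [abs_of_nonneg (by positivity), ← ENNReal.ofReal_mul (by positivity),
    ← ENNReal.ofReal_mul hδ.le, hrδ]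
  congr 1
  field_simp

lemma image_mul_rpow_Ioc_subset (hK : 0 < K) (hδ : 0 ≤ δ) (ρ : ℝ) :
    (fun r => K * r ^ δ) '' Ioc 0 ρ ⊆ Ioc 0 (K * ρ ^ δ) := by
  rintro _ ⟨r, ⟨hr0, hrρ⟩, rfl⟩
  exact ⟨by positivity, mul_le_mul_of_nonneg_left (Real.rpow_le_rpow hr0.le hrρ hδ) hK.le⟩

lemma lintegral_Ioc_comp_mul_rpow_le (hK : 0 < K) (hδ : 0 < δ) (φ : ℝ → ℝ) (ρ : ℝ) :
    ∫⁻ r in Ioc 0 ρ, ENNReal.ofReal (φ (K * r ^ δ) / r) ≤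
      ENNReal.ofReal (1 / δ) * ∫⁻ τ in Ioc 0 (K * ρ ^ δ), ENNReal.ofReal (φ τ / τ) := by
  calc ∫⁻ r in Ioc 0 ρ, ENNReal.ofReal (φ (K * r ^ δ) / r)
      = ENNReal.ofReal (1 / δ) * (ENNReal.ofReal δ *
          ∫⁻ r in Ioc 0 ρ, ENNReal.ofReal (φ (K * r ^ δ) / r)) := by
        rw [← mul_assoc, ← ENNReal.ofReal_mul (by positivity), one_div_mul_cancel hδ.ne',
          ENNReal.ofReal_one, one_mul]
    _ = ENNReal.ofReal (1 / δ) *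
          ∫⁻ τ in (fun r => K * r ^ δ) '' Ioc 0 ρ, ENNReal.ofReal (φ τ / τ) := by
        rw [lintegral_image_mul_rpow_div_self measurableSet_Ioc Ioc_subset_Ioi_self hK hδ]
    _ ≤ ENNReal.ofReal (1 / δ) * ∫⁻ τ in Ioc 0 (K * ρ ^ δ), ENNReal.ofReal (φ τ / τ) := by
        gcongr
        exact image_mul_rpow_Ioc_subset hK hδ.le ρ

end ChangeOfVariables

lemma lintegral_modulusPtOn_comp_le {n : ℕ} {s : Set (EuclideanSpace ℝ (Fin n))}
    {g : EuclideanSpace ℝ (Fin n) → ℝ} {M : ℝ} (hg : ∀ y ∈ s, ‖g y‖ ≤ M)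
    {U : EuclideanSpace ℝ (Fin n) → EuclideanSpace ℝ (Fin n)} (hUs : MapsTo U s s)
    {K δ : ℝ} (hK : 0 < K) (hδ : 0 < δ)
    (hU : ∀ x ∈ s, ∀ y ∈ s, dist (U x) (U y) ≤ K * dist x y ^ δ)
    {x : EuclideanSpace ℝ (Fin n)} (hx : x ∈ s) (ρ : ℝ) :
    ∫⁻ r in Ioc 0 ρ, ENNReal.ofReal (modulusPtOn s (g ∘ U) x r / r) ≤
      ENNReal.ofReal (1 / δ) *
        ∫⁻ τ in Ioc 0 (K * ρ ^ δ), ENNReal.ofReal (modulusPtOn s g (U x) τ / τ) := by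
  refine le_trans (setLIntegral_mono' measurableSet_Ioc fun r hr => ?_)
    (lintegral_Ioc_comp_mul_rpow_le hK hδ (modulusPtOn s g (U x)) ρ)
  refine ENNReal.ofReal_le_ofReal (div_le_div_of_nonneg_right ?_ hr.1.le)
  refine modulusPtOn_comp_le hg hUs fun y hy hxy => (hU x hx y hy).trans ?_
  gcongr

theorem diniPt_comp_holder_general {n : ℕ} (s : Set (EuclideanSpace ℝ (Fin n)))
    (hs : IsCompact s) (ζ₀ : EuclideanSpace ℝ (Fin n) → ℝ) (hζ₀ : ContinuousOn ζ₀ s)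
    (K δ : ℝ) (hK : 1 ≤ K) (hδ : 0 < δ)
    (ρ : ℝ)
    (U : EuclideanSpace ℝ (Fin n) → EuclideanSpace ℝ (Fin n))
    (hUmaps : MapsTo U s s)
    (hUhold : ∀ x ∈ s, ∀ y ∈ s, dist (U x) (U y) ≤ K * dist x y ^ δ) :
    diniSeminormPt s (ζ₀ ∘ U) ρ ≤
      ENNReal.ofReal (1 / δ) * diniSeminormPt s ζ₀ (K * ρ ^ δ) := by
  obtain ⟨M, hM⟩ := hs.exists_bound_of_continuousOn hζ₀
  refine iSup_le fun x => ?_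
  refine (lintegral_modulusPtOn_comp_le hM hUmaps (by linarith) hδ hUhold x.2 ρ).trans ?_
  gcongr
  exact le_iSup (fun y : s => ∫⁻ τ in Ioc 0 (K * ρ ^ δ),
    ENNReal.ofReal (modulusPtOn s ζ₀ y τ / τ)) ⟨U x, hUmaps x.2⟩

/-- Composition with a surjective `(K,δ)`-Hölder map: if `⟨ζ₀⟩_* < ∞` and
`|U x − U y| ≤ K |x−y|^δ`, then `ζ = ζ₀ ∘ U` satisfies
`⟨ζ⟩_{*,ρ} ≤ (1/δ)·⟨ζ₀⟩_{*,K ρ^δ}`. -/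
theorem diniPt_comp_holder {n : ℕ} (s : Set (EuclideanSpace ℝ (Fin n)))
    (hs : IsCompact s) (ζ₀ : EuclideanSpace ℝ (Fin n) → ℝ) (hζ₀ : ContinuousOn ζ₀ s)
    (K δ : ℝ) (hK : 1 ≤ K) (hδ : 0 < δ) (hδ1 : δ ≤ 1)
    (ρ : ℝ) (hρ : 0 < ρ)
    (hfin : diniSeminormPt s ζ₀ (K * ρ ^ δ) < ⊤)
    (U : EuclideanSpace ℝ (Fin n) → EuclideanSpace ℝ (Fin n))
    (hUmaps : MapsTo U s s) (hUsurj : SurjOn U s s)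
    (hUhold : ∀ x ∈ s, ∀ y ∈ s, dist (U x) (U y) ≤ K * dist x y ^ δ) :
    diniSeminormPt s (ζ₀ ∘ U) ρ ≤
      ENNReal.ofReal (1 / δ) * diniSeminormPt s ζ₀ (K * ρ ^ δ) :=
  diniPt_comp_holder_general s hs ζ₀ hζ₀ K δ hK hδ ρ U hUmaps hUhold
end

section
/- Streamline Hölder estimate from a log-Lipschitz velocity: let v : [0,T] × Ω̄ → ℝ² be continuous, bounded by B, and satisfy the log-Lipschitz estimate |v(t,x) − v(t,y)| ≤ c·B·|x−y|·(1 + |log|x−y||) for |x−y| ≤ 1. Then the flow maps U(s,t,x) (solutions of dU/ds = v(s,U), U(t,t,x) = x) satisfy |U(s,t,x) − U(s,t,y)| ≤ c₂·|x−y|^δ with δ = e^{−cB T}, for all s, t ∈ [0,T] and |x−y| ≤ 1, where c₂ depends only on Ω. -/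
open Set Function

open Filter Topology Real

/-!
With `η(τ) = ‖U(τ,t,x) − U(τ,t,y)‖`, the log-Lipschitz bound gives `η' ≤ cB η (1 + |log η|)`.
For `η ≤ 1` the substitution `w = 1 − log η` linearises this to `w' ≥ −cB w`, so
`η(s) ≤ exp (1 − (1 − log η(t)) e^{−cB|s−t|}) ≤ e · η(t)^{e^{−cBT}}`. The solution of the
comparison equation is used as a barrier in the fencing theorem, which needs a strict
inequality, so the rate is first taken slightly larger than `cB` and then let decrease to it.
The barrier stays below `1`, where the log-Lipschitz bound is available, as long as
`e · η(t)^{e^{−cBT}} < 1`; for larger `η(t)` the trivial bound `η(s) ≤ η(t) + 2BT` suffices.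
-/

/-- The solution of `η' = μ η (1 - log η)`, `η a = exp (1 - K)`. -/
noncomputable def osgoodBarrier (μ K a τ : ℝ) : ℝ :=
  exp (1 - K * exp (-(μ * (τ - a))))

theorem hasDerivAt_osgoodBarrier (μ K a τ : ℝ) :
    HasDerivAt (osgoodBarrier μ K a)
      (μ * osgoodBarrier μ K a τ * (K * exp (-(μ * (τ - a))))) τ := by
  have hlin : HasDerivAt (fun τ : ℝ => -(μ * (τ - a))) (-μ) τ := by
    simpa using (((hasDerivAt_id τ).sub_const a).const_mul μ).fun_neg
  convert (((hlin.exp).const_mul K).const_sub 1).exp using 1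
  · rfl
  · unfold osgoodBarrier
    ring

theorem log_osgoodBarrier (μ K a τ : ℝ) :
    log (osgoodBarrier μ K a τ) = 1 - K * exp (-(μ * (τ - a))) :=
  log_exp _

section Osgood

variable {E : Type*} [NormedAddCommGroup E] [NormedSpace ℝ E]

theorem norm_le_osgoodBarrier_of_lt_rate {κ μ K a b : ℝ} (hκ : 0 ≤ κ) (hμ : κ < μ)
    (hK : 1 ≤ K * exp (-(μ * (b - a)))) {f f' : ℝ → E}
    (hf : ∀ τ ∈ Icc a b, HasDerivAt f (f' τ) τ) (ha : ‖f a‖ ≤ exp (1 - K))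
    (hf' : ∀ τ ∈ Ico a b, 0 < ‖f τ‖ → ‖f τ‖ ≤ 1 →
      ‖f' τ‖ ≤ κ * ‖f τ‖ * (1 + |log ‖f τ‖|)) :
    ∀ τ ∈ Icc a b, ‖f τ‖ ≤ osgoodBarrier μ K a τ := by
  have hK_pos : 0 < K := pos_of_mul_pos_left (one_pos.trans_le hK) (exp_pos _).le
  have hK_le : ∀ τ ≤ b, 1 ≤ K * exp (-(μ * (τ - a))) := fun τ hτ =>
    hK.trans (by gcongr; nlinarith)
  refine image_norm_le_of_norm_deriv_right_lt_deriv_boundary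
    (fun τ hτ => (hf τ hτ).continuousAt.continuousWithinAt)
    (fun τ hτ => (hf τ (Ico_subset_Icc_self hτ)).hasDerivWithinAt)
    (by simpa [osgoodBarrier] using ha) (hasDerivAt_osgoodBarrier μ K a) ?_
  intro τ hτ hfτ
  set w := K * exp (-(μ * (τ - a)))
  have hw : 1 ≤ w := hK_le τ hτ.2.le
  have hbar_pos : 0 < osgoodBarrier μ K a τ := exp_pos _
  have hbar_le : osgoodBarrier μ K a τ ≤ 1 := exp_le_one_iff.mpr (by linarith)
  have hlog : 1 + |log (osgoodBarrier μ K a τ)| = w := by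
    rw [abs_of_nonpos (log_nonpos hbar_pos.le hbar_le), log_osgoodBarrier]
    ring
  calc ‖f' τ‖ ≤ κ * osgoodBarrier μ K a τ * w := by
        simpa only [hfτ, hlog] using hf' τ hτ (hfτ ▸ hbar_pos) (hfτ ▸ hbar_le)
    _ < μ * osgoodBarrier μ K a τ * w := by gcongr

theorem norm_le_osgoodBarrier {κ K a b : ℝ} (hκ : 0 ≤ κ) (hab : a ≤ b)
    (hK : 1 < K * exp (-(κ * (b - a)))) {f f' : ℝ → E}
    (hf : ∀ τ ∈ Icc a b, HasDerivAt f (f' τ) τ) (ha : ‖f a‖ ≤ exp (1 - K))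
    (hf' : ∀ τ ∈ Ico a b, 0 < ‖f τ‖ → ‖f τ‖ ≤ 1 →
      ‖f' τ‖ ≤ κ * ‖f τ‖ * (1 + |log ‖f τ‖|)) :
    ‖f b‖ ≤ osgoodBarrier κ K a b := by
  have hbarrier : Continuous fun μ => osgoodBarrier μ K a b := by
    unfold osgoodBarrier
    fun_prop
  have hK_near : ∀ᶠ μ in 𝓝[>] κ, 1 < K * exp (-(μ * (b - a))) := by
    have hrate : Continuous fun μ => K * exp (-(μ * (b - a))) := by fun_prop
    exact nhdsWithin_le_nhds ((hrate.tendsto κ).eventually (lt_mem_nhds hK))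
  refine ge_of_tendsto ((hbarrier.tendsto κ).mono_left (nhdsWithin_le_nhds (s := Ioi κ))) ?_
  filter_upwards [hK_near, self_mem_nhdsWithin] with μ hμK hμ
  exact norm_le_osgoodBarrier_of_lt_rate hκ hμ hμK.le hf ha hf' b (right_mem_Icc.2 hab)

theorem norm_le_exp_one_mul_rpow_of_le {κ T a b : ℝ} (hκ : 0 ≤ κ) (hab : a ≤ b)
    (hbaT : b - a ≤ T) {f f' : ℝ → E} (hf : ∀ τ ∈ Icc a b, HasDerivAt f (f' τ) τ)
    (hf' : ∀ τ ∈ Ico a b, 0 < ‖f τ‖ → ‖f τ‖ ≤ 1 →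
      ‖f' τ‖ ≤ κ * ‖f τ‖ * (1 + |log ‖f τ‖|))
    (ha : 0 < ‖f a‖) (hsmall : exp 1 * ‖f a‖ ^ exp (-(κ * T)) < 1) :
    ‖f b‖ ≤ exp 1 * ‖f a‖ ^ exp (-(κ * T)) := by
  set d := ‖f a‖
  set δ := exp (-(κ * T))
  set θ := exp (-(κ * (b - a)))
  have hδθ : δ ≤ θ := exp_le_exp.2 (by nlinarith)
  have hδ : 0 < δ := exp_pos _
  have hrpow : d ^ δ = exp (log d * δ) := rpow_def_of_pos ha δ
  have hlog_δ : log d * δ < -1 := by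
    rw [hrpow, ← exp_add, exp_lt_one_iff] at hsmall
    linarith
  have hlog : log d < 0 := by nlinarith
  have hK : 1 < (1 - log d) * θ := by nlinarith
  calc ‖f b‖ ≤ osgoodBarrier κ (1 - log d) a b :=
        norm_le_osgoodBarrier hκ hab hK hf (by rw [sub_sub_cancel, exp_log ha]) hf'
    _ ≤ exp (1 + log d * δ) := exp_le_exp.2 (by nlinarith [exp_pos (-(κ * (b - a)))])
    _ = exp 1 * d ^ δ := by rw [exp_add, hrpow]

theorem norm_le_exp_one_mul_rpow {κ T s t : ℝ} (hκ : 0 ≤ κ) (hst : |s - t| ≤ T)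
    {f f' : ℝ → E} (hf : ∀ τ ∈ uIcc s t, HasDerivAt f (f' τ) τ)
    (hf' : ∀ τ ∈ uIcc s t, 0 < ‖f τ‖ → ‖f τ‖ ≤ 1 →
      ‖f' τ‖ ≤ κ * ‖f τ‖ * (1 + |log ‖f τ‖|))
    (ht : 0 < ‖f t‖) (hsmall : exp 1 * ‖f t‖ ^ exp (-(κ * T)) < 1) :
    ‖f s‖ ≤ exp 1 * ‖f t‖ ^ exp (-(κ * T)) := by
  rcases le_total t s with hts | hst'
  · rw [uIcc_of_ge hts] at hf hf'
    exact norm_le_exp_one_mul_rpow_of_le hκ hts ((le_abs_self _).trans hst) hf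
      (fun τ hτ => hf' τ (Ico_subset_Icc_self hτ)) ht hsmall
  · rw [uIcc_of_le hst'] at hf hf'
    have hrefl : ∀ τ ∈ Icc s t, s + t - τ ∈ Icc s t := fun τ hτ =>
      ⟨by linarith [hτ.2], by linarith [hτ.1]⟩
    have hg : ∀ τ ∈ Icc s t,
        HasDerivAt (fun τ => f (s + t - τ)) ((-1 : ℝ) • f' (s + t - τ)) τ := fun τ hτ =>
      (hf _ (hrefl τ hτ)).scomp τ ((hasDerivAt_id τ).const_sub (s + t))
    have hts : t - s ≤ T := by rwa [abs_sub_comm, abs_of_nonneg (by linarith)] at hst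
    simpa using norm_le_exp_one_mul_rpow_of_le hκ hst' hts hg
      (fun τ hτ h0 h1 => by
        simpa [norm_smul] using hf' _ (hrefl τ (Ico_subset_Icc_self hτ)) h0 h1)
      (by simpa using ht) (by simpa using hsmall)

theorem dist_le_mul_of_norm_deriv_le {γ γ' : ℝ → E} {B a b s t : ℝ}
    (hγ : ∀ τ ∈ Icc a b, HasDerivAt γ (γ' τ) τ) (hB : ∀ τ ∈ Icc a b, ‖γ' τ‖ ≤ B)
    (hs : s ∈ Icc a b) (ht : t ∈ Icc a b) : dist (γ s) (γ t) ≤ B * (b - a) := by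
  calc dist (γ s) (γ t) ≤ B * ‖s - t‖ := by
        rw [dist_eq_norm]
        exact (convex_Icc a b).norm_image_sub_le_of_norm_hasDerivWithin_le
          (fun τ hτ => (hγ τ hτ).hasDerivWithinAt) hB ht hs
    _ ≤ B * (b - a) := by
        rw [← dist_eq_norm]
        exact mul_le_mul_of_nonneg_left (Real.dist_le_of_mem_Icc hs ht)
          ((norm_nonneg _).trans (hB s hs))

theorem dist_le_exp_one_mul_rpow_of_logLipschitz {v : ℝ → E → E} {γ₁ γ₂ : ℝ → E}
    {κ T s t : ℝ} (hκ : 0 ≤ κ) (hst : |s - t| ≤ T)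
    (hv : ∀ τ ∈ uIcc s t, ∀ x y, 0 < dist x y → dist x y ≤ 1 →
      ‖v τ x - v τ y‖ ≤ κ * dist x y * (1 + |log (dist x y)|))
    (hγ₁ : ∀ τ ∈ uIcc s t, HasDerivAt γ₁ (v τ (γ₁ τ)) τ)
    (hγ₂ : ∀ τ ∈ uIcc s t, HasDerivAt γ₂ (v τ (γ₂ τ)) τ)
    (ht : 0 < dist (γ₁ t) (γ₂ t))
    (hsmall : exp 1 * dist (γ₁ t) (γ₂ t) ^ exp (-(κ * T)) < 1) :
    dist (γ₁ s) (γ₂ s) ≤ exp 1 * dist (γ₁ t) (γ₂ t) ^ exp (-(κ * T)) := by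
  simp only [dist_eq_norm] at hv ht hsmall ⊢
  exact norm_le_exp_one_mul_rpow hκ hst (fun τ hτ => (hγ₁ τ hτ).sub (hγ₂ τ hτ))
    (fun τ hτ => hv τ hτ _ _) ht hsmall

end Osgood

theorem flow_holder_of_logLipschitz_general
    (T B c : ℝ) (hT : 0 < T) (hB : 0 ≤ B) (hc : 0 < c)
    (v : ℝ → EuclideanSpace ℝ (Fin 2) → EuclideanSpace ℝ (Fin 2))
    (hv_bdd : ∀ t ∈ Icc (0 : ℝ) T, ∀ x, ‖v t x‖ ≤ B)
    (hv_loglip : ∀ t ∈ Icc (0 : ℝ) T, ∀ x y, 0 < dist x y → dist x y ≤ 1 →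
      ‖v t x - v t y‖ ≤ c * B * dist x y * (1 + |Real.log (dist x y)|))
    (U : ℝ → ℝ → EuclideanSpace ℝ (Fin 2) → EuclideanSpace ℝ (Fin 2))
    (hU_init : ∀ t ∈ Icc (0 : ℝ) T, ∀ x, U t t x = x)
    (hU_ode : ∀ t ∈ Icc (0 : ℝ) T, ∀ x, ∀ s ∈ Icc (0 : ℝ) T,
      HasDerivAt (fun s' => U s' t x) (v s (U s t x)) s) :
    ∃ c₂ : ℝ, 0 < c₂ ∧ ∀ s ∈ Icc (0 : ℝ) T, ∀ t ∈ Icc (0 : ℝ) T, ∀ x y,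
      dist x y ≤ 1 →
      dist (U s t x) (U s t y) ≤ c₂ * dist x y ^ Real.exp (-(c * B * T)) := by
  refine ⟨(1 + 2 * B * T) * exp 1, by positivity, fun s hs t ht x y hxy => ?_⟩
  set δ := exp (-(c * B * T))
  rw [mul_assoc]
  rcases (dist_nonneg (x := x) (y := y)).eq_or_lt with hxy₀ | hxy₀
  · obtain rfl := dist_eq_zero.1 hxy₀.symm
    rw [dist_self]
    positivity
  by_cases hsmall : exp 1 * dist x y ^ δ < 1
  · have hsub : uIcc s t ⊆ Icc 0 T := uIcc_subset_Icc hs ht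
    have hflow := dist_le_exp_one_mul_rpow_of_logLipschitz (by positivity)
      (Real.dist_le_of_mem_Icc hs ht |>.trans_eq (sub_zero T))
      (fun τ hτ => hv_loglip τ (hsub hτ)) (fun τ hτ => hU_ode t ht x τ (hsub hτ))
      (fun τ hτ => hU_ode t ht y τ (hsub hτ))
      (by rwa [hU_init t ht, hU_init t ht]) (by rwa [hU_init t ht, hU_init t ht])
    rw [hU_init t ht, hU_init t ht] at hflow
    exact hflow.trans (le_mul_of_one_le_left (by positivity) (by nlinarith [mul_nonneg hB hT.le]))
  · have hdisp : ∀ z, dist (U s t z) z ≤ B * T := fun z => by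
      simpa [hU_init t ht z] using dist_le_mul_of_norm_deriv_le (hU_ode t ht z)
        (fun τ hτ => hv_bdd τ hτ _) hs ht
    calc dist (U s t x) (U s t y) ≤ dist (U s t x) x + dist x y + dist y (U s t y) :=
          dist_triangle4 _ _ _ _
      _ ≤ 1 + 2 * B * T := by linarith [hdisp x, dist_comm y (U s t y) ▸ hdisp y]
      _ ≤ _ := le_mul_of_one_le_right (by positivity) (not_lt.1 hsmall)

/-- Streamline Hölder estimate from a log-Lipschitz velocity field: if `v` is bounded by
`B` and log-Lipschitz with constant `cB`, then the flow maps `U(s,t,·)` are Hölder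
continuous of exponent `δ = e^{−cBT}` with a uniform constant `c₂`. -/
theorem flow_holder_of_logLipschitz
    (T B c : ℝ) (hT : 0 < T) (hB : 0 ≤ B) (hc : 0 < c)
    (v : ℝ → EuclideanSpace ℝ (Fin 2) → EuclideanSpace ℝ (Fin 2))
    (hv_cont : Continuous (uncurry v))
    (hv_bdd : ∀ t ∈ Icc (0 : ℝ) T, ∀ x, ‖v t x‖ ≤ B)
    (hv_loglip : ∀ t ∈ Icc (0 : ℝ) T, ∀ x y, 0 < dist x y → dist x y ≤ 1 →
      ‖v t x - v t y‖ ≤ c * B * dist x y * (1 + |Real.log (dist x y)|))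
    (U : ℝ → ℝ → EuclideanSpace ℝ (Fin 2) → EuclideanSpace ℝ (Fin 2))
    (hU_init : ∀ t ∈ Icc (0 : ℝ) T, ∀ x, U t t x = x)
    (hU_ode : ∀ t ∈ Icc (0 : ℝ) T, ∀ x, ∀ s ∈ Icc (0 : ℝ) T,
      HasDerivAt (fun s' => U s' t x) (v s (U s t x)) s) :
    ∃ c₂ : ℝ, 0 < c₂ ∧ ∀ s ∈ Icc (0 : ℝ) T, ∀ t ∈ Icc (0 : ℝ) T, ∀ x y,
      dist x y ≤ 1 →
      dist (U s t x) (U s t y) ≤ c₂ * dist x y ^ Real.exp (-(c * B * T)) :=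
  flow_holder_of_logLipschitz_general T B c hT hB hc v hv_bdd hv_loglip U hU_init hU_ode
end
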